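/- arXiv:2308.00644 — 7 statements merged into one kernel-verified Lean document; each statement's English description precedes it below -/
import Mathlib

section
/- If m ≡ 1 (mod 16) and m > 1, then S²(m) < S(m) < m. -/
/-- The Syracuse function: the odd part of 3m+1. -/
def syr (m : ℕ) : ℕ := (3 * m + 1) / 2 ^ ((3 * m + 1).factorization 2)

lemma syr_lt_of_mod4 (m : ℕ) (h : m % 4 = 1) (hm : 1 < m) : syr m < m := by
  have h4 : 4 ∣ 3 * m + 1 := by omega
  have hpos : 0 < 3 * m + 1 := by omega
  have hv : 2 ≤ (3 * m + 1).factorization 2 := by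
    have := (Nat.Prime.pow_dvd_iff_le_factorization Nat.prime_two (n := 3*m+1) (k := 2)
      (by omega)).mp (by simpa using h4)
    simpa using this
  have hdvd : 2 ^ ((3 * m + 1).factorization 2) ∣ 3 * m + 1 :=
    Nat.ordProj_dvd _ _
  have hle : syr m ≤ (3 * m + 1) / 4 := by
    unfold syr
    exact Nat.div_le_div_left (by
      calc (4:ℕ) = 2^2 := rfl
      _ ≤ 2 ^ ((3 * m + 1).factorization 2) := Nat.pow_le_pow_right (by norm_num) hv) (by norm_num)
  have : (3 * m + 1) / 4 < m := by omega
  omega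

lemma syr_eq (k : ℕ) : syr (16 * k + 1) = 12 * k + 1 := by
  have h : 3 * (16 * k + 1) + 1 = 2 ^ 2 * (12 * k + 1) := by ring
  have hodd : ¬ 2 ∣ (12 * k + 1) := by omega
  have hf : (3 * (16 * k + 1) + 1).factorization 2 = 2 := by
    rw [h, Nat.factorization_mul (by positivity) (by positivity)]
    rw [Nat.Prime.factorization_pow Nat.prime_two]
    simp [Nat.factorization_eq_zero_of_not_dvd hodd]
  unfold syr
  rw [hf, h, Nat.mul_div_cancel_left _ (by norm_num)]

theorem stmt7 (m : ℕ) (h : m % 16 = 1) (hm : 1 < m) :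
    syr (syr m) < syr m ∧ syr m < m := by
  obtain ⟨k, rfl⟩ : ∃ k, m = 16 * k + 1 := ⟨m / 16, by omega⟩
  have hk : 1 ≤ k := by omega
  rw [syr_eq]
  constructor
  · exact syr_lt_of_mod4 _ (by omega) (by omega)
  · omega
end

section
/- Let k ≥ 1. If m is a positive integer with m ≡ (4^{k+1}−1)/3 + 2·4^k (mod 2·4^{k+1}), then m ≡ 5 (mod 8) and S²(m) < S(m) < m. -/
lemma syr_of (a b m : ℕ) (hb : Odd b) (hm : 3 * m + 1 = 2 ^ a * b) : syr m = b := by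
  have hb1 : b % 2 = 1 := Nat.odd_iff.mp hb
  have hb0 : b ≠ 0 := by omega
  have hnd : ¬ (2 ∣ b) := by omega
  have hfac : ((2 ^ a * b).factorization) 2 = a := by
    rw [Nat.factorization_mul (pow_ne_zero _ two_ne_zero) hb0]
    simp [Nat.Prime.factorization_pow, Nat.factorization_eq_zero_of_not_dvd hnd,
      Nat.Prime.factorization_self Nat.prime_two]
  rw [syr, hm, hfac, Nat.mul_div_cancel_left _ (Nat.pow_pos (by norm_num))]

theorem stmt9 (k m : ℕ) (hk : 1 ≤ k) (hpos : 0 < m)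
    (h : m % (2 * 4 ^ (k + 1)) = ((4 ^ (k + 1) - 1) / 3 + 2 * 4 ^ k) % (2 * 4 ^ (k + 1))) :
    m % 8 = 5 ∧ syr (syr m) < syr m ∧ syr m < m := by
  set r : ℕ := (4 ^ (k + 1) - 1) / 3 + 2 * 4 ^ k with hrdef
  have hP : 4 ^ (k + 1) % 3 = 1 := by
    rw [Nat.pow_mod]; simp
  have hP1 : 1 ≤ 4 ^ (k + 1) := Nat.one_le_pow _ _ (by norm_num)
  have e1 : 4 ^ (k + 1) = 4 * 4 ^ k := by rw [pow_succ]; ring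
  have h4 : 4 ≤ 4 ^ k := by
    calc (4:ℕ) = 4 ^ 1 := by norm_num
    _ ≤ 4 ^ k := Nat.pow_le_pow_right (by norm_num) hk
  have hr : 3 * r + 1 = 10 * 4 ^ k := by
    rw [hrdef]; omega
  have e2 : (2:ℕ) ^ (2 * k + 1) = 2 * 4 ^ k := by
    rw [pow_succ, show (4:ℕ) = 2 ^ 2 from rfl, ← pow_mul]; ring
  have hrlt : r < 2 * 4 ^ (k + 1) := by omega
  have hm' : m = 2 * 4 ^ (k + 1) * (m / (2 * 4 ^ (k + 1))) + r := by
    conv_lhs => rw [← Nat.div_add_mod m (2 * 4 ^ (k + 1))]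
    rw [h, Nat.mod_eq_of_lt hrlt]
  set t : ℕ := m / (2 * 4 ^ (k + 1)) with htdef
  have key : 3 * m + 1 = 2 ^ (2 * k + 1) * (5 + 12 * t) := by
    rw [e2]
    calc 3 * m + 1 = 24 * 4 ^ k * t + (3 * r + 1) := by rw [hm', e1]; ring
    _ = 24 * 4 ^ k * t + 10 * 4 ^ k := by rw [hr]
    _ = 2 * 4 ^ k * (5 + 12 * t) := by ring
  have hsyr : syr m = 5 + 12 * t := syr_of _ _ _ (by rw [Nat.odd_iff]; omega) key
  -- m % 8 = 5
  have h8 : m % 8 = 5 := by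
    obtain ⟨c, hc⟩ : (8:ℕ) ∣ 2 ^ (2 * k + 1) := by
      have : (2:ℕ) ^ 3 ∣ 2 ^ (2 * k + 1) := pow_dvd_pow 2 (by omega)
      simpa using this
    have : 3 * m + 1 = 8 * (c * (5 + 12 * t)) := by rw [key, hc]; ring
    omega
  refine ⟨h8, ?_, ?_⟩
  · -- syr (syr m) < syr m
    rw [hsyr]
    set n : ℕ := 5 + 12 * t with hndef
    have hn1 : 3 * n + 1 = 4 * (4 + 9 * t) := by rw [hndef]; ring
    have hd : syr n ∣ 3 * n + 1 := Nat.ordCompl_dvd (3 * n + 1) 2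
    have hodd : ¬ (2 ∣ syr n) :=
      Nat.not_dvd_ordCompl Nat.prime_two (by positivity)
    have hcop : Nat.Coprime (syr n) 4 := by
      have : Nat.Coprime (syr n) 2 :=
        (Nat.Prime.coprime_iff_not_dvd Nat.prime_two |>.mpr hodd).symm
      simpa using this.pow_right 2
    have hdvd : syr n ∣ 4 + 9 * t := by
      refine hcop.dvd_of_dvd_mul_left ?_
      rwa [hn1] at hd
    have hle : syr n ≤ 4 + 9 * t := Nat.le_of_dvd (by positivity) hdvd
    omega
  · -- syr m < m
    rw [hsyr, hm']
    have h32 : 32 * t ≤ 2 * 4 ^ (k + 1) * t := by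
      have : 32 ≤ 2 * 4 ^ (k + 1) := by omega
      exact Nat.mul_le_mul_right t this
    have hr13 : 13 ≤ r := by omega
    linarith
end

section
/- Let k ≥ 1. If m is a positive integer with m ≡ (4^{k+1}−1)/3 (mod 4^{k+2}) and m ≠ (4^{k+1}−1)/3, then m ≡ 5 (mod 8) and S²(m) < S(m) < m. -/
lemma syr_of_eq (m j n : ℕ) (hn : Odd n) (hm : 3 * m + 1 = 2 ^ j * n) :
    syr m = n := by
  have hn0 : n ≠ 0 := by rintro rfl; simp at hn
  have hodd : ¬ (2 ∣ n) := by rw [Nat.two_dvd_ne_zero]; exact Nat.odd_iff.mp hn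
  have hfac : (3 * m + 1).factorization 2 = j := by
    rw [hm, Nat.factorization_mul (by positivity) hn0]
    simp [Nat.Prime.factorization_pow, Nat.Prime.factorization_self Nat.prime_two, Nat.factorization_eq_zero_of_not_dvd hodd]
  rw [syr, hfac, hm, Nat.mul_div_cancel_left _ (by positivity)]

theorem stmt10 (k m : ℕ) (hk : 1 ≤ k) (hpos : 0 < m)
    (h : m % 4 ^ (k + 2) = ((4 ^ (k + 1) - 1) / 3) % 4 ^ (k + 2))
    (hne : m ≠ (4 ^ (k + 1) - 1) / 3) :
    m % 8 = 5 ∧ syr (syr m) < syr m ∧ syr m < m := by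
  set P : ℕ := 4 ^ (k + 1) with hPdef
  set Q : ℕ := 4 ^ (k + 2) with hQdef
  have hQP : Q = 4 * P := by rw [hPdef, hQdef, pow_succ]; ring
  have hP16 : (16 : ℕ) ∣ P := by
    rw [hPdef]
    calc (16 : ℕ) = 4 ^ (1 + 1) := by norm_num
    _ ∣ 4 ^ (k + 1) := pow_dvd_pow 4 (by omega)
  have hPmod : P % 3 = 1 := by
    rw [hPdef, Nat.pow_mod]; norm_num
  set a : ℕ := (4 ^ (k + 1) - 1) / 3 with ha
  have hP0 : 16 ≤ P := Nat.le_of_dvd (by positivity) hP16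
  have h3a : 3 * a + 1 = P := by omega
  have haQ : a < Q := by omega
  have hmod : m % Q = a := by rw [h, Nat.mod_eq_of_lt haQ]
  set t : ℕ := m / Q with ht
  have hmQ : m = a + Q * t := by
    have h1 := Nat.div_add_mod m Q
    rw [← ht] at h1
    omega
  have ht1 : 1 ≤ t := by
    rcases Nat.eq_zero_or_pos t with h0 | h1
    · exfalso; apply hne; rw [h0, mul_zero, add_zero] at hmQ; exact hmQ
    · exact h1
  have h8Qt : (8 : ℕ) ∣ Q * t := by
    have h8Q : (8 : ℕ) ∣ Q := by
      have : (16 : ℕ) ∣ Q := by rw [hQP]; exact Dvd.dvd.mul_left hP16 4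
      omega
    exact h8Q.mul_right t
  have hm8 : m % 8 = 5 := by omega
  -- syr m = 12t + 1
  have hsm : syr m = 12 * t + 1 := by
    apply syr_of_eq m (2 * (k + 1)) (12 * t + 1)
    · exact ⟨6 * t, by ring⟩
    · have h2P : (2 : ℕ) ^ (2 * (k + 1)) = P := by
        rw [hPdef, pow_mul]; norm_num
      rw [h2P]
      calc 3 * m + 1 = P + 3 * (Q * t) := by omega
      _ = P * (12 * t + 1) := by rw [hQP]; ring
  -- syr m < m
  have hQ64 : 64 ≤ Q := by
    have : (4:ℕ) ^ 3 ≤ 4 ^ (k + 2) := Nat.pow_le_pow_right (by norm_num) (by omega)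
    simpa [hQdef] using this
  have h64t : 64 * t ≤ Q * t := Nat.mul_le_mul_right t hQ64
  have hlt1 : syr m < m := by rw [hsm]; omega
  -- syr (syr m) < syr m
  have hlt2 : syr (syr m) < syr m := by
    rw [hsm]
    set n : ℕ := 12 * t + 1 with hn
    have h3n : 3 * n + 1 = 4 * (9 * t + 1) := by omega
    have hdvd : (2:ℕ) ^ 2 ∣ 3 * n + 1 := ⟨9 * t + 1, by omega⟩
    have hnu : 2 ≤ (3 * n + 1).factorization 2 :=
      (Nat.Prime.pow_dvd_iff_le_factorization Nat.prime_two (by positivity)).mp hdvd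
    have hle : syr n ≤ (3 * n + 1) / 4 := by
      rw [syr]
      apply Nat.div_le_div_left _ (by norm_num)
      calc (4:ℕ) = 2 ^ 2 := by norm_num
      _ ≤ 2 ^ ((3 * n + 1).factorization 2) := Nat.pow_le_pow_right (by norm_num) hnu
    have : (3 * n + 1) / 4 = 9 * t + 1 := by omega
    omega
  exact ⟨hm8, hlt2, hlt1⟩
end

section
/- Let k ≥ 1. If m is a positive integer with m ≡ (4^{k+2}−1)/3 + 2·4^k (mod 2·4^{k+1}), then m ≡ 5 (mod 8) and S(m) < S²(m) < m. -/
lemma syr_of_eq_s11 (m e o : ℕ) (ho : o % 2 = 1) (h : 3 * m + 1 = 2 ^ e * o) :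
    syr m = o := by
  have ho' : ¬ (2 ∣ o) := by omega
  have hopos : 0 < o := by omega
  unfold syr
  rw [h]
  have h2 : (2 ^ e * o).factorization 2 = e := by
    rw [Nat.factorization_mul (by positivity) (by omega)]
    simp [Nat.Prime.factorization_pow, Nat.factorization_eq_zero_of_not_dvd ho', Nat.Prime.factorization_self Nat.prime_two]
  rw [h2, Nat.mul_div_cancel_left _ (by positivity)]

theorem stmt11 (k m : ℕ) (hk : 1 ≤ k) (hpos : 0 < m)
    (h : m % (2 * 4 ^ (k + 1)) = ((4 ^ (k + 2) - 1) / 3 + 2 * 4 ^ k) % (2 * 4 ^ (k + 1))) :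
    m % 8 = 5 ∧ syr m < syr (syr m) ∧ syr (syr m) < m := by
  obtain ⟨k', rfl⟩ : ∃ k', k = k' + 1 := ⟨k - 1, by omega⟩
  set t := 4 ^ k' with ht
  have htpos : 0 < t := Nat.pow_pos (by norm_num)
  have hs3 : 3 ∣ 4 ^ (k' + 1 + 2) - 1 := by
    have := Nat.sub_dvd_pow_sub_pow 4 1 (k' + 1 + 2)
    simpa using this
  set s := (4 ^ (k' + 1 + 2) - 1) / 3 with hs
  have h4 : 4 ^ (k' + 1 + 2) = 64 * t := by
    rw [ht, pow_add]; ring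
  have h4pos : 1 ≤ 4 ^ (k' + 1 + 2) := Nat.one_le_pow _ _ (by norm_num)
  have hs1 : 3 * s + 1 = 64 * t := by
    have hdm := Nat.div_mul_cancel hs3
    omega
  have hM : 2 * 4 ^ (k' + 1 + 1) = 32 * t := by rw [ht, pow_add]; ring
  have h2t : 2 * 4 ^ (k' + 1) = 8 * t := by rw [ht, pow_add]; ring
  have hrlt : s + 8 * t < 32 * t := by omega
  rw [hM, h2t] at h
  have hmod : (s + 8 * t) % (32 * t) = s + 8 * t := Nat.mod_eq_of_lt hrlt
  rw [hmod] at h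
  set a := m / (32 * t) with ha
  have hm : m = 32 * t * a + (s + 8 * t) := by
    have h0 := Nat.div_add_mod m (32 * t)
    rw [← ha] at h0
    omega
  set b := t * a with hb
  have hm' : m = 32 * b + s + 8 * t := by
    have : 32 * t * a = 32 * b := by rw [hb]; ring
    omega
  have hpow : (2 : ℕ) ^ (2 * k' + 3) = 8 * t := by
    rw [ht, pow_add, pow_mul]; norm_num; omega
  have hrhs : 8 * t * (12 * a + 11) = 96 * b + 88 * t := by rw [hb]; ring
  have h1 : 3 * m + 1 = 2 ^ (2 * k' + 3) * (12 * a + 11) := by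
    rw [hpow, hrhs]; omega
  have syr1 : syr m = 12 * a + 11 := syr_of_eq_s11 m _ _ (by omega) h1
  have syr2 : syr (12 * a + 11) = 18 * a + 17 :=
    syr_of_eq_s11 _ 1 _ (by omega) (by ring)
  have hab : a ≤ b := Nat.le_mul_of_pos_left a htpos
  refine ⟨by omega, ?_, ?_⟩
  · rw [syr1, syr2]; omega
  · rw [syr1, syr2]; omega
end

section
/- There is no odd positive integer m with distinct values m, S(m), S²(m), S³(m) such that m < S³(m) < S(m) < S²(m) (i.e., the quadruple (m, S(m), S²(m), S³(m)) never has permutation pattern (1,3,4,2)). -/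
lemma syr_mul (m : ℕ) : 2 ^ ((3 * m + 1).factorization 2) * syr m = 3 * m + 1 :=
  Nat.ordProj_mul_ordCompl_eq_self (3 * m + 1) 2

lemma syr_odd (m : ℕ) : syr m % 2 = 1 := by
  have h : ¬ (2 ∣ syr m) := Nat.not_dvd_ordCompl Nat.prime_two (by omega)
  omega

lemma fact_pos (m : ℕ) (hm : m % 2 = 1) : 1 ≤ (3 * m + 1).factorization 2 := by
  have h : (2:ℕ) ^ 1 ∣ 3 * m + 1 := by rw [pow_one]; omega
  exact (Nat.Prime.pow_dvd_iff_le_factorization Nat.prime_two (by omega)).mp h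

lemma syr_step (m : ℕ) (hm : m % 2 = 1) (h : m < syr m) : 2 * syr m = 3 * m + 1 := by
  have hmul := syr_mul m
  have hk := fact_pos m hm
  rcases Nat.lt_or_ge ((3 * m + 1).factorization 2) 2 with h2 | h2
  · have hone : (3 * m + 1).factorization 2 = 1 := by omega
    rw [hone, pow_one] at hmul; omega
  · have h4 : (4:ℕ) ≤ 2 ^ ((3 * m + 1).factorization 2) := by
      calc (4:ℕ) = 2 ^ 2 := rfl
        _ ≤ _ := Nat.pow_le_pow_right (by norm_num) h2
    have := Nat.mul_le_mul_right (syr m) h4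
    omega

theorem stmt16 :
    ¬ ∃ m : ℕ, 0 < m ∧ Odd m ∧
      m < syr^[3] m ∧ syr^[3] m < syr m ∧ syr m < syr^[2] m := by
  rintro ⟨a, hpos, hodd, h1, h2, h3⟩
  rw [Nat.odd_iff] at hodd
  simp only [Function.iterate_succ, Function.iterate_zero, Function.comp_apply, id_eq] at h1 h2 h3
  set b := syr a with hb
  set c := syr b with hc
  set d := syr c with hd
  -- h1 : a < d, h2 : d < b, h3 : b < c
  have hbodd : b % 2 = 1 := syr_odd a
  have hcodd : c % 2 = 1 := syr_odd b
  have hab : 2 * b = 3 * a + 1 := syr_step a hodd (by omega)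
  have hbc : 2 * c = 3 * b + 1 := syr_step b hbodd h3
  have hmul := syr_mul c
  rw [← hd] at hmul
  have hk := fact_pos c hcodd
  set k := (3 * c + 1).factorization 2 with hkdef
  rcases Nat.lt_or_ge k 3 with hlt | hge
  · interval_cases k
    · rw [pow_one] at hmul; omega
    · norm_num at hmul; omega
  · have h8 : (8:ℕ) ≤ 2 ^ k := by
      calc (8:ℕ) = 2 ^ 3 := rfl
        _ ≤ _ := Nat.pow_le_pow_right (by norm_num) hge
    have := Nat.mul_le_mul_right d h8
    omega
end

section
/- If m ≡ 27 (mod 32), then m < S²(m) < S(m) < S³(m). -/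
lemma fact2 (a n : ℕ) (hn : Odd n) : (2 ^ a * n).factorization 2 = a := by
  have h0 : n ≠ 0 := by rintro rfl; simp [Nat.odd_iff] at hn
  rw [Nat.factorization_mul (pow_ne_zero _ two_ne_zero) h0]
  simp [Nat.factorization_eq_zero_of_not_dvd (show ¬ 2 ∣ n by rw [Nat.odd_iff] at hn; omega),
    Nat.Prime.factorization_pow, Nat.prime_two]

lemma syr_eq_s17 (m a n : ℕ) (hn : Odd n) (heq : 3 * m + 1 = 2 ^ a * n) : syr m = n := by
  rw [syr, heq, fact2 a n hn, Nat.mul_div_cancel_left _ (pow_pos two_pos a)]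

theorem stmt17 (m : ℕ) (h : m % 32 = 27) :
    m < syr^[2] m ∧ syr^[2] m < syr m ∧ syr m < syr^[3] m := by
  obtain ⟨k, rfl⟩ : ∃ k, m = 32 * k + 27 := ⟨m / 32, by omega⟩
  have h1 : syr (32 * k + 27) = 48 * k + 41 :=
    syr_eq_s17 _ 1 _ ⟨24 * k + 20, by ring⟩ (by ring)
  have h2 : syr (48 * k + 41) = 36 * k + 31 :=
    syr_eq_s17 _ 2 _ ⟨18 * k + 15, by ring⟩ (by ring)
  have h3 : syr (36 * k + 31) = 54 * k + 47 :=
    syr_eq_s17 _ 1 _ ⟨27 * k + 23, by ring⟩ (by ring)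
  simp only [Function.iterate_succ, Function.iterate_zero, Function.comp_apply, id_eq,
    h1, h2, h3]
  omega
end

section
/- If m ≡ 57 (mod 64), then S(m) < S³(m) < m < S²(m), while if m ≡ 25 (mod 64), then S³(m) < S(m) < m < S²(m). -/
lemma fac2 (a b : ℕ) (hb : b % 2 = 1) : (2 ^ a * b).factorization 2 = a := by
  have hb0 : b ≠ 0 := by omega
  rw [Nat.factorization_mul (pow_ne_zero _ two_ne_zero) hb0]
  simp [Nat.Prime.factorization_pow, Nat.factorization_eq_zero_of_not_dvd (show ¬ (2:ℕ) ∣ b by omega), Nat.Prime.factorization_self Nat.prime_two]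

lemma syr_eq_s19 (m a b : ℕ) (h : 3 * m + 1 = 2 ^ a * b) (hb : b % 2 = 1) : syr m = b := by
  rw [syr, h, fac2 a b hb, Nat.mul_div_cancel_left _ (show 0 < 2 ^ a by positivity)]

lemma syr_le (m a : ℕ) (h : 2 ^ a ∣ 3 * m + 1) : syr m ≤ (3 * m + 1) / 2 ^ a := by
  have hle : a ≤ (3 * m + 1).factorization 2 :=
    (Nat.Prime.pow_dvd_iff_le_factorization Nat.prime_two (by omega)).mp h
  exact Nat.div_le_div_left (Nat.pow_le_pow_right (by norm_num) hle) (by positivity)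

theorem stmt19 (m : ℕ) :
    (m % 64 = 57 → syr m < syr^[3] m ∧ syr^[3] m < m ∧ m < syr^[2] m) ∧
    (m % 64 = 25 → syr^[3] m < syr m ∧ syr m < m ∧ m < syr^[2] m) := by
  constructor
  · intro h
    obtain ⟨k, rfl⟩ : ∃ k, m = 64 * k + 57 := ⟨m / 64, by omega⟩
    have h1 : syr (64 * k + 57) = 48 * k + 43 := syr_eq_s19 _ 2 _ (by ring) (by omega)
    have h2 : syr (48 * k + 43) = 72 * k + 65 := syr_eq_s19 _ 1 _ (by ring) (by omega)
    have h3 : syr (72 * k + 65) = 54 * k + 49 := syr_eq_s19 _ 2 _ (by ring) (by omega)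
    simp only [Function.iterate_succ, Function.iterate_zero, Function.comp_apply, id_eq,
      h1, h2, h3]
    omega
  · intro h
    obtain ⟨k, rfl⟩ : ∃ k, m = 64 * k + 25 := ⟨m / 64, by omega⟩
    have h1 : syr (64 * k + 25) = 48 * k + 19 := syr_eq_s19 _ 2 _ (by ring) (by omega)
    have h2 : syr (48 * k + 19) = 72 * k + 29 := syr_eq_s19 _ 1 _ (by ring) (by omega)
    have h3 : syr (72 * k + 29) ≤ 27 * k + 11 := by
      have := syr_le (72 * k + 29) 3 ⟨27 * k + 11, by ring⟩
      have : (3 * (72 * k + 29) + 1) / 2 ^ 3 = 27 * k + 11 := by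
        rw [show 3 * (72 * k + 29) + 1 = 2 ^ 3 * (27 * k + 11) by ring,
          Nat.mul_div_cancel_left _ (by norm_num)]
      omega
    simp only [Function.iterate_succ, Function.iterate_zero, Function.comp_apply, id_eq,
      h1, h2]
    omega
end
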